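/- Let n ≥ 1, l, r̃ ∈ ℝ and σ ∈ ℝ. With p(x,τ_b,μ_b) = x²(τ_b²+|μ_b|²) − 2σxτ_b, a(x,τ_b,μ_b) = x^{−2l−1}(τ_b²+|μ_b|²)^{r̃−1/2}, and ŝ(x,τ_b,μ_b) = 2(l+r̃)·τ_b·(τ_b²+|μ_b|²)^{−1}, one has at every point with (τ_b,μ_b) ≠ 0: {p, a} + 2·ŝ·a·p = x^{−2(l+r̃)+1}·(x²τ_b² + x²|μ_b|²)^{r̃−3/2}·4σ·( −(l+r̃)·x²τ_b² + (l+1/2)·x²|μ_b|² ). In particular, writing τ = xτ_b, μ = xμ_b, the resulting expression is manifestly a nonnegative multiple of σ wherever l+1/2 > 0 and l+r̃ < 0, and a nonpositive multiple of σ wherever l+1/2 < 0 and l+r̃ > 0. -/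

import Mathlib

/-- The b-Poisson bracket on the b-phase space `(x, τ_b, μ_b) ∈ (0,∞) × ℝ × ℝ^{n-1}`, for
symbols independent of the boundary variables `y`:
`{f, g} = (∂_{τ_b} f)(x ∂ₓ g) − (x ∂ₓ f)(∂_{τ_b} g)`. -/
noncomputable def bBracket {m : ℕ} (f g : ℝ → ℝ → EuclideanSpace ℝ (Fin m) → ℝ)
    (x τ : ℝ) (μ : EuclideanSpace ℝ (Fin m)) : ℝ :=
  deriv (fun t => f x t μ) τ * (x * deriv (fun s => g s τ μ) x)
    - (x * deriv (fun s => f s τ μ) x) * deriv (fun t => g x t μ) τ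

/-!
With `Q = τ_b² + |μ_b|²` one has `∂_{τ_b} a = (2r̃ − 1) τ_b Q⁻¹ a` and `x∂ₓ a = (−2l − 1) a`.
After substitution the σ-free terms of `{p, a} + 2ŝap` cancel, because
`−2(2l+1) − 2(2r̃−1) + 4(l+r̃) = 0`, leaving `4σ x Q⁻¹ a ((l + 1/2)|μ_b|² − (l + r̃)τ_b²)`.
The weight `x Q⁻¹ a = x^{−2l} Q^{r̃−3/2}` is positive, so the sign of `σ` times the right-hand side
is that of `(l + 1/2)|μ|² − (l + r̃)τ²`.
-/

theorem bBracket_eq_of_hasDerivAt {m : ℕ} {f g : ℝ → ℝ → EuclideanSpace ℝ (Fin m) → ℝ}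
    {x τ fτ fx gτ gx : ℝ} {μ : EuclideanSpace ℝ (Fin m)}
    (hfτ : HasDerivAt (fun t => f x t μ) fτ τ) (hfx : HasDerivAt (fun s => f s τ μ) fx x)
    (hgτ : HasDerivAt (fun t => g x t μ) gτ τ) (hgx : HasDerivAt (fun s => g s τ μ) gx x) :
    bBracket f g x τ μ = fτ * (x * gx) - (x * fx) * gτ := by
  rw [bBracket, hfτ.deriv, hfx.deriv, hgτ.deriv, hgx.deriv]

theorem sq_add_norm_sq_pos {E : Type*} [NormedAddCommGroup E] {τ : ℝ} {μ : E}
    (h : (τ, μ) ≠ 0) : 0 < τ ^ 2 + ‖μ‖ ^ 2 := by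
  obtain hτ | hμ : τ ≠ 0 ∨ μ ≠ 0 := by
    simpa only [ne_eq, Prod.mk_eq_zero, not_and_or] using h
  · exact add_pos_of_pos_of_nonneg (by positivity) (by positivity)
  · exact add_pos_of_nonneg_of_pos (sq_nonneg τ) (pow_pos (norm_pos_iff.mpr hμ) 2)

section Symbols

variable {σ x τ m : ℝ}

theorem hasDerivAt_symbol_tau :
    HasDerivAt (fun t => x ^ 2 * (t ^ 2 + m) - 2 * σ * x * t) (x ^ 2 * (2 * τ) - 2 * σ * x) τ := by
  have hsq : HasDerivAt (fun t : ℝ => t ^ 2 + m) (2 * τ) τ := by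
    simpa using (hasDerivAt_pow 2 τ).add_const m
  exact (hsq.const_mul (x ^ 2)).sub (hasDerivAt_const_mul (2 * σ * x))

theorem hasDerivAt_symbol_x :
    HasDerivAt (fun s => s ^ 2 * (τ ^ 2 + m) - 2 * σ * s * τ)
      (2 * x * (τ ^ 2 + m) - 2 * σ * τ) x := by
  have hsq : HasDerivAt (fun s : ℝ => s ^ 2) (2 * x) x := by simpa using hasDerivAt_pow 2 x
  exact (hsq.mul_const (τ ^ 2 + m)).sub ((hasDerivAt_const_mul (2 * σ)).mul_const τ)

theorem hasDerivAt_weight_tau {c k : ℝ} (hQ : 0 < τ ^ 2 + m) :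
    HasDerivAt (fun t => c * (t ^ 2 + m) ^ k)
      (c * (2 * τ * k * (τ ^ 2 + m) ^ (k - 1))) τ := by
  have hsq : HasDerivAt (fun t : ℝ => t ^ 2 + m) (2 * τ) τ := by
    simpa using (hasDerivAt_pow 2 τ).add_const m
  exact (hsq.rpow_const (Or.inl hQ.ne')).const_mul c

end Symbols

theorem rpow_mul_sq_mul_rpow_eq {x Q : ℝ} (hx : 0 < x) (hQ : 0 ≤ Q) (l r : ℝ) :
    x ^ (-2 * (l + r) + 1) * (x ^ 2 * Q) ^ (r - 3 / 2) = x ^ (-2 * l - 2) * Q ^ (r - 3 / 2) := by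
  rw [Real.mul_rpow (by positivity) hQ, ← Real.rpow_natCast x 2, ← Real.rpow_mul hx.le,
    ← mul_assoc, ← Real.rpow_add hx]
  congr 2
  push_cast
  ring

theorem modified_commutator_eq {σ l r x τ : ℝ} {m : ℕ} {μ : EuclideanSpace ℝ (Fin m)}
    (hx : 0 < x) (hQ : 0 < τ ^ 2 + ‖μ‖ ^ 2) :
    bBracket
        (fun x τ μ => x ^ 2 * (τ ^ 2 + ‖μ‖ ^ 2) - 2 * σ * x * τ)
        (fun x τ μ => x ^ (-2 * l - 1) * (τ ^ 2 + ‖μ‖ ^ 2) ^ (r - 1 / 2))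
        x τ μ
      + 2 * (2 * (l + r) * τ * (τ ^ 2 + ‖μ‖ ^ 2)⁻¹) *
          (x ^ (-2 * l - 1) * (τ ^ 2 + ‖μ‖ ^ 2) ^ (r - 1 / 2)) *
          (x ^ 2 * (τ ^ 2 + ‖μ‖ ^ 2) - 2 * σ * x * τ)
    = x ^ (-2 * (l + r) + 1) * (x ^ 2 * τ ^ 2 + x ^ 2 * ‖μ‖ ^ 2) ^ (r - 3 / 2) *
        (4 * σ) * (-(l + r) * (x ^ 2 * τ ^ 2) + (l + 1 / 2) * (x ^ 2 * ‖μ‖ ^ 2)) := by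
  set Q := τ ^ 2 + ‖μ‖ ^ 2
  rw [bBracket_eq_of_hasDerivAt hasDerivAt_symbol_tau hasDerivAt_symbol_x
    (hasDerivAt_weight_tau hQ) ((Real.hasDerivAt_rpow_const (Or.inl hx.ne')).mul_const _),
    show x ^ 2 * τ ^ 2 + x ^ 2 * ‖μ‖ ^ 2 = x ^ 2 * Q by ring, rpow_mul_sq_mul_rpow_eq hx hQ.le]
  have hx_pow : x ^ (-2 * l - 1) = x * x ^ (-2 * l - 2) := by
    rw [show -2 * l - 1 = 1 + (-2 * l - 2) by ring, Real.rpow_add hx, Real.rpow_one]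
  have hx_pow' : x ^ (-2 * l - 1 - 1) = x ^ (-2 * l - 2) := by ring_nf
  have hQ_pow : Q ^ (r - 1 / 2) = Q * Q ^ (r - 3 / 2) := by
    rw [show r - 1 / 2 = 1 + (r - 3 / 2) by ring, Real.rpow_add hQ, Real.rpow_one]
  have hQ_pow' : Q ^ (r - 1 / 2 - 1) = Q ^ (r - 3 / 2) := by ring_nf
  rw [hx_pow, hx_pow', hQ_pow, hQ_pow']
  field_simp
  ring

theorem mul_mul_four_mul_nonneg {σ c e : ℝ} (hc : 0 ≤ c) (he : 0 ≤ e) :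
    0 ≤ σ * (c * (4 * σ) * e) := by
  have : σ * (c * (4 * σ) * e) = 4 * σ ^ 2 * c * e := by ring
  rw [this]
  positivity

theorem mul_mul_four_mul_nonpos {σ c e : ℝ} (hc : 0 ≤ c) (he : e ≤ 0) :
    σ * (c * (4 * σ) * e) ≤ 0 := by
  have : σ * (c * (4 * σ) * e) = 4 * σ ^ 2 * c * e := by ring
  rw [this]
  exact mul_nonpos_of_nonneg_of_nonpos (by positivity) he

theorem alt_modified_commutator_symbol_general (n : ℕ) (l r σ : ℝ) :
    (∀ (x τb : ℝ), 0 < x → ∀ μb : EuclideanSpace ℝ (Fin (n - 1)), (τb, μb) ≠ 0 →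
      bBracket
          (fun x τ μ => x ^ 2 * (τ ^ 2 + ‖μ‖ ^ 2) - 2 * σ * x * τ)
          (fun x τ μ => x ^ (-2 * l - 1) * (τ ^ 2 + ‖μ‖ ^ 2) ^ (r - 1 / 2))
          x τb μb
        + 2 * (2 * (l + r) * τb * (τb ^ 2 + ‖μb‖ ^ 2)⁻¹) *
            (x ^ (-2 * l - 1) * (τb ^ 2 + ‖μb‖ ^ 2) ^ (r - 1 / 2)) *
            (x ^ 2 * (τb ^ 2 + ‖μb‖ ^ 2) - 2 * σ * x * τb)
      = x ^ (-2 * (l + r) + 1) * (x ^ 2 * τb ^ 2 + x ^ 2 * ‖μb‖ ^ 2) ^ (r - 3 / 2) *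
          (4 * σ) * (-(l + r) * (x ^ 2 * τb ^ 2) + (l + 1 / 2) * (x ^ 2 * ‖μb‖ ^ 2))) ∧
    (0 < l + 1 / 2 → l + r < 0 →
      ∀ (x τb : ℝ), 0 < x → ∀ μb : EuclideanSpace ℝ (Fin (n - 1)), (τb, μb) ≠ 0 →
        0 ≤ σ * (x ^ (-2 * (l + r) + 1) * (x ^ 2 * τb ^ 2 + x ^ 2 * ‖μb‖ ^ 2) ^ (r - 3 / 2) *
          (4 * σ) * (-(l + r) * (x ^ 2 * τb ^ 2) + (l + 1 / 2) * (x ^ 2 * ‖μb‖ ^ 2)))) ∧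
    (l + 1 / 2 < 0 → 0 < l + r →
      ∀ (x τb : ℝ), 0 < x → ∀ μb : EuclideanSpace ℝ (Fin (n - 1)), (τb, μb) ≠ 0 →
        σ * (x ^ (-2 * (l + r) + 1) * (x ^ 2 * τb ^ 2 + x ^ 2 * ‖μb‖ ^ 2) ^ (r - 3 / 2) *
          (4 * σ) * (-(l + r) * (x ^ 2 * τb ^ 2) + (l + 1 / 2) * (x ^ 2 * ‖μb‖ ^ 2))) ≤ 0) := by
  refine ⟨fun x τ hx μ hne => modified_commutator_eq hx (sq_add_norm_sq_pos hne), ?_, ?_⟩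
  · intro hl hlr x τ hx μ _
    refine mul_mul_four_mul_nonneg (by positivity) (add_nonneg ?_ ?_)
    · exact mul_nonneg (by linarith) (by positivity)
    · exact mul_nonneg hl.le (by positivity)
  · intro hl hlr x τ hx μ _
    refine mul_mul_four_mul_nonpos (by positivity) (add_nonpos ?_ ?_)
    · exact mul_nonpos_of_nonpos_of_nonneg (by linarith) (by positivity)
    · exact mul_nonpos_of_nonpos_of_nonneg hl.le (by positivity)

/-- The alternative modified commutator identity (remark after Lemma 4.4): with
`p = x²(τ_b²+|μ_b|²) − 2σxτ_b`, `a = x^{−2l−1}(τ_b²+|μ_b|²)^{r̃−1/2}` and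
`ŝ = 2(l+r̃)τ_b(τ_b²+|μ_b|²)^{−1}`,
`{p,a} + 2 ŝ a p
   = x^{−2(l+r̃)+1}(x²τ_b²+x²|μ_b|²)^{r̃−3/2}·4σ(−(l+r̃)x²τ_b² + (l+1/2)x²|μ_b|²)`,
which is a nonnegative multiple of `σ` when `l+1/2 > 0`, `l+r̃ < 0`, and a nonpositive
multiple of `σ` when `l+1/2 < 0`, `l+r̃ > 0`. -/
theorem alt_modified_commutator_symbol (n : ℕ) (hn : 1 ≤ n) (l r σ : ℝ) :
    (∀ (x τb : ℝ), 0 < x → ∀ μb : EuclideanSpace ℝ (Fin (n - 1)), (τb, μb) ≠ 0 →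
      bBracket
          (fun x τ μ => x ^ 2 * (τ ^ 2 + ‖μ‖ ^ 2) - 2 * σ * x * τ)
          (fun x τ μ => x ^ (-2 * l - 1) * (τ ^ 2 + ‖μ‖ ^ 2) ^ (r - 1 / 2))
          x τb μb
        + 2 * (2 * (l + r) * τb * (τb ^ 2 + ‖μb‖ ^ 2)⁻¹) *
            (x ^ (-2 * l - 1) * (τb ^ 2 + ‖μb‖ ^ 2) ^ (r - 1 / 2)) *
            (x ^ 2 * (τb ^ 2 + ‖μb‖ ^ 2) - 2 * σ * x * τb)
      = x ^ (-2 * (l + r) + 1) * (x ^ 2 * τb ^ 2 + x ^ 2 * ‖μb‖ ^ 2) ^ (r - 3 / 2) *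
          (4 * σ) * (-(l + r) * (x ^ 2 * τb ^ 2) + (l + 1 / 2) * (x ^ 2 * ‖μb‖ ^ 2))) ∧
    (0 < l + 1 / 2 → l + r < 0 →
      ∀ (x τb : ℝ), 0 < x → ∀ μb : EuclideanSpace ℝ (Fin (n - 1)), (τb, μb) ≠ 0 →
        0 ≤ σ * (x ^ (-2 * (l + r) + 1) * (x ^ 2 * τb ^ 2 + x ^ 2 * ‖μb‖ ^ 2) ^ (r - 3 / 2) *
          (4 * σ) * (-(l + r) * (x ^ 2 * τb ^ 2) + (l + 1 / 2) * (x ^ 2 * ‖μb‖ ^ 2)))) ∧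
    (l + 1 / 2 < 0 → 0 < l + r →
      ∀ (x τb : ℝ), 0 < x → ∀ μb : EuclideanSpace ℝ (Fin (n - 1)), (τb, μb) ≠ 0 →
        σ * (x ^ (-2 * (l + r) + 1) * (x ^ 2 * τb ^ 2 + x ^ 2 * ‖μb‖ ^ 2) ^ (r - 3 / 2) *
          (4 * σ) * (-(l + r) * (x ^ 2 * τb ^ 2) + (l + 1 / 2) * (x ^ 2 * ‖μb‖ ^ 2))) ≤ 0) :=
  alt_modified_commutator_symbol_general n l r σ
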